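/- arXiv:2108.13096 — 5 statements merged into one kernel-verified Lean document; each statement's English description precedes it below -/
import Mathlib

section
/- Let n ≥ 1, D ≥ 1 be integers, let Ω ⊆ ℂⁿ be a nonempty open connected subset, and let (f_m)_{m∈ℕ} be a sequence of maps ℂⁿ → ℂⁿ, each holomorphic on Ω, converging locally uniformly on Ω to the identity map. Suppose there is a nonempty open subset Ω′ ⊆ Ω whose closure is compact and contained in Ω such that for every m, every point x in the closure of Ω′ and every i with 1 ≤ i ≤ D, the i-th iterate f_m^{[i]}(x) lies in Ω, and such that f_m^{[D]}(x) = x for every x ∈ Ω′ and every m. Then there exists m₀ ∈ ℕ such that f_m(x) = x for all x ∈ Ω and all m ≥ m₀. -/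
/-!
Fix `x₀ ∈ Ω'` and a closed ball around it in `Ω'`; on it `g = f m` is uniformly `ε`-close to the
identity for large `m`. Since `g^[D] = id` there, the displacement sum
`S = ∑_{i<D} (g^[i] - id)` satisfies `S - S ∘ g = D • (g - id)`, while `S` is holomorphic and
bounded by `D² ε` near `x₀`. The Schwarz lemma then gives `D ‖g x - x‖ ≤ (8 D² ε / r) ‖g x - x‖`,
so `g = id` near `x₀` once `ε` is small, and on all of `Ω` by the identity theorem, which for
holomorphic maps on a normed space reduces to the one-variable case on complex lines.
-/

open Filter Topology Metric Set Function

section IdentityTheorem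

variable {E F : Type*} [NormedAddCommGroup E] [NormedSpace ℂ E]
  [NormedAddCommGroup F] [NormedSpace ℂ F] [CompleteSpace F]

theorem DifferentiableOn.eqOn_zero_ball_of_eventuallyEq_zero {f : E → F} {c : E} {R : ℝ}
    (hf : DifferentiableOn ℂ f (ball c R)) (hfc : f =ᶠ[𝓝 c] 0) : EqOn f 0 (ball c R) := by
  intro z hz
  rcases eq_or_ne z c with rfl | hzc
  · exact hfc.self_of_nhds
  have hzc' : 0 < ‖z - c‖ := norm_pos_iff.2 (sub_ne_zero.2 hzc)
  set L : ℂ →ᵃ[ℂ] E := AffineMap.lineMap c z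
  have hL : MapsTo L (ball (0 : ℂ) (R / ‖z - c‖)) (ball c R) := fun t ht ↦ by
    simpa [L, AffineMap.lineMap_apply_module', lt_div_iff₀, hzc', dist_eq_norm, norm_smul] using ht
  have hfL : AnalyticOnNhd ℂ (f ∘ L) (ball (0 : ℂ) (R / ‖z - c‖)) :=
    (hf.comp (AffineMap.lineMap c z).differentiableOn hL).analyticOnNhd isOpen_ball
  have h1 : (1 : ℂ) ∈ ball (0 : ℂ) (R / ‖z - c‖) := by
    simpa [lt_div_iff₀, hzc', dist_eq_norm] using hz
  have hfL0 : f ∘ L =ᶠ[𝓝 0] 0 := by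
    have hL0 : Tendsto L (𝓝 0) (𝓝 c) := by
      simpa [L] using L.continuous_of_finiteDimensional.tendsto 0
    exact hL0.eventually hfc
  simpa [L] using hfL.eqOn_zero_of_preconnected_of_eventuallyEq_zero
    (convex_ball 0 _).isPreconnected (mem_ball_self (pos_of_mem_ball h1)) hfL0 h1

theorem DifferentiableOn.eqOn_zero_of_preconnected_of_eventuallyEq_zero {f : E → F} {U : Set E}
    (hf : DifferentiableOn ℂ f U) (hU : IsOpen U) (hU' : IsPreconnected U) {z₀ : E}
    (h₀ : z₀ ∈ U) (hfz₀ : f =ᶠ[𝓝 z₀] 0) : EqOn f 0 U := by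
  suffices U ⊆ {x | f =ᶠ[𝓝 x] 0} from fun x hx ↦ (this hx).self_of_nhds
  refine hU'.subset_of_closure_inter_subset isOpen_setOfPred_eventually_nhds ⟨z₀, h₀, hfz₀⟩ ?_
  rintro x ⟨hxS, hxU⟩
  obtain ⟨ρ, hρ, hxρ⟩ := Metric.isOpen_iff.1 hU x hxU
  obtain ⟨y, hyS, hxy⟩ := Metric.mem_closure_iff.1 hxS (ρ / 2) (half_pos hρ)
  have hyρ : ball y (ρ / 2) ⊆ U :=
    (ball_subset_ball' (by rw [dist_comm]; linarith)).trans hxρ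
  have hfy := (hf.mono hyρ).eqOn_zero_ball_of_eventuallyEq_zero hyS
  exact eventually_of_mem (isOpen_ball.mem_nhds (mem_ball.2 hxy)) hfy

theorem DifferentiableOn.eqOn_of_preconnected_of_eventuallyEq {f g : E → F} {U : Set E}
    (hf : DifferentiableOn ℂ f U) (hg : DifferentiableOn ℂ g U) (hU : IsOpen U)
    (hU' : IsPreconnected U) {z₀ : E} (h₀ : z₀ ∈ U) (hfg : f =ᶠ[𝓝 z₀] g) : EqOn f g U :=
  fun _ hx ↦ sub_eq_zero.1 <| (hf.sub hg).eqOn_zero_of_preconnected_of_eventuallyEq_zero hU hU' h₀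
    (hfg.mono fun _ h ↦ sub_eq_zero.2 h) hx

end IdentityTheorem

theorem dist_iterate_le_of_forall_dist_le {α : Type*} [PseudoMetricSpace α] {g : α → α} {x : α}
    {ε : ℝ} {k : ℕ} (hε : 0 ≤ ε) (hg : ∀ y ∈ closedBall x (k * ε), dist (g y) y ≤ ε) :
    ∀ i ≤ k, dist (g^[i] x) x ≤ i * ε := by
  intro i hik
  induction i with
  | zero => simp
  | succ i ih =>
    have hi := ih (by omega)
    have hmem : g^[i] x ∈ closedBall x (k * ε) :=
      hi.trans (by gcongr; exact_mod_cast (i.le_succ.trans hik))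
    calc dist (g^[i + 1] x) x ≤ dist (g (g^[i] x)) (g^[i] x) + dist (g^[i] x) x := by
          rw [iterate_succ_apply']; exact dist_triangle _ _ _
      _ ≤ ε + i * ε := add_le_add (hg _ hmem) hi
      _ = (i + 1 : ℕ) * ε := by push_cast; ring

theorem DifferentiableAt.iterate_of_forall {𝕜 E : Type*} [NontriviallyNormedField 𝕜]
    [NormedAddCommGroup E] [NormedSpace 𝕜 E] {g : E → E} {x : E} {k : ℕ}
    (hg : ∀ j < k, DifferentiableAt 𝕜 g (g^[j] x)) : DifferentiableAt 𝕜 g^[k] x := by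
  induction k with
  | zero => exact differentiableAt_id
  | succ k ih =>
    rw [iterate_succ']
    exact (hg k k.lt_succ_self).comp x (ih fun j hj ↦ hg j (hj.trans k.lt_succ_self))

section DisplacementSum

variable {α : Type*} [AddCommGroup α]

def iterateDisplacementSum (g : α → α) (k : ℕ) (x : α) : α :=
  ∑ i ∈ Finset.range k, (g^[i] x - x)

theorem iterateDisplacementSum_sub_apply_of_isPeriodicPt {g : α → α} {k : ℕ} {x : α}
    (hx : IsPeriodicPt g k x) :
    iterateDisplacementSum g k x - iterateDisplacementSum g k (g x) = k • (g x - x) := by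
  have hshift : ∑ i ∈ Finset.range k, g^[i] (g x) = ∑ i ∈ Finset.range k, g^[i] x := by
    have h := (Finset.sum_range_succ (fun i ↦ g^[i] x) k).symm.trans
      (Finset.sum_range_succ' (fun i ↦ g^[i] x) k)
    rw [hx.eq, iterate_zero_apply, add_left_inj] at h
    simpa only [iterate_succ_apply] using h.symm
  simp only [iterateDisplacementSum, Finset.sum_sub_distrib, hshift, Finset.sum_const,
    Finset.card_range, nsmul_sub]
  abel

end DisplacementSum

section NormedDisplacementSum

variable {E : Type*} [NormedAddCommGroup E]

theorem norm_iterateDisplacementSum_le {g : E → E} {k : ℕ} {x : E} {C : ℝ}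
    (h : ∀ i < k, ‖g^[i] x - x‖ ≤ C) : ‖iterateDisplacementSum g k x‖ ≤ k * C := by
  calc ‖iterateDisplacementSum g k x‖ ≤ ∑ i ∈ Finset.range k, ‖g^[i] x - x‖ := norm_sum_le _ _
    _ ≤ k * C := by
      simpa using Finset.sum_le_card_nsmul _ _ C fun i hi ↦ h i (Finset.mem_range.1 hi)

theorem differentiableAt_iterateDisplacementSum {𝕜 : Type*} [NontriviallyNormedField 𝕜]
    [NormedSpace 𝕜 E] {g : E → E} {k : ℕ} {x : E}
    (hg : ∀ j < k, DifferentiableAt 𝕜 g (g^[j] x)) :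
    DifferentiableAt 𝕜 (iterateDisplacementSum g k) x := by
  unfold iterateDisplacementSum
  refine DifferentiableAt.fun_sum fun i hi ↦ ?_
  refine (DifferentiableAt.iterate_of_forall fun j hj ↦ hg j ?_).sub differentiableAt_id
  exact hj.trans (Finset.mem_range.1 hi)

end NormedDisplacementSum

theorem eqOn_id_ball_of_isPeriodicPt_of_dist_le {E : Type*} [NormedAddCommGroup E]
    [NormedSpace ℂ E] {g : E → E} {x₀ : E} {r ε : ℝ} {D : ℕ} (hD : D ≠ 0) (hε : 0 ≤ ε)
    (hεr : 16 * D * ε ≤ r) (hgd : ∀ y ∈ closedBall x₀ r, DifferentiableAt ℂ g y)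
    (hclose : ∀ y ∈ closedBall x₀ r, dist (g y) y ≤ ε)
    (hper : ∀ y ∈ closedBall x₀ r, IsPeriodicPt g D y) : EqOn g id (ball x₀ (r / 4)) := by
  intro x hx
  have hr : 0 < r := by linarith [pos_of_mem_ball hx]
  have hD1 : (1 : ℝ) ≤ D := by exact_mod_cast Nat.one_le_iff_ne_zero.2 hD
  have hεD : ε ≤ D * ε := le_mul_of_one_le_left hε hD1
  have hstay : ∀ w ∈ ball x₀ (r / 2), closedBall w (D * ε) ⊆ closedBall x₀ r := fun w hw ↦
    closedBall_subset_closedBall' (by linarith [mem_ball.1 hw])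
  have hdrift : ∀ w ∈ ball x₀ (r / 2), ∀ i ≤ D, dist (g^[i] w) w ≤ D * ε := fun w hw i hi ↦
    (dist_iterate_le_of_forall_dist_le hε (fun y hy ↦ hclose y (hstay w hw hy)) i hi).trans
      (by gcongr)
  set S := iterateDisplacementSum g D
  have hSd : DifferentiableOn ℂ S (ball x₀ (r / 2)) := fun w hw ↦
    (differentiableAt_iterateDisplacementSum fun j hj ↦
      hgd _ (hstay w hw (mem_closedBall.2 (hdrift w hw j hj.le)))).differentiableWithinAt
  have hSb : ∀ w ∈ ball x₀ (r / 2), ‖S w‖ ≤ D * (D * ε) := fun w hw ↦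
    norm_iterateDisplacementSum_le fun i hi ↦ by rw [← dist_eq_norm]; exact hdrift w hw i hi.le
  have hsub : ball x (r / 4) ⊆ ball x₀ (r / 2) := ball_subset_ball' (by linarith [mem_ball.1 hx])
  have hmaps : MapsTo S (ball x (r / 4)) (closedBall (S x) (2 * (D * (D * ε)))) := fun w hw ↦ by
    rw [mem_closedBall, dist_eq_norm]
    linarith [norm_sub_le (S w) (S x), hSb w (hsub hw),
      hSb x (hsub (mem_ball_self (by positivity)))]
  have hxr : x ∈ closedBall x₀ r := ball_subset_closedBall (ball_subset_ball (by linarith) hx)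
  have hgx : g x ∈ ball x (r / 4) := mem_ball.2 ((hclose x hxr).trans_lt (by linarith))
  -- `S x - S (g x) = D • (g x - x)`, so the Schwarz bound for `S` contracts `g x - x`
  have hschwarz := Complex.dist_le_div_mul_dist_of_mapsTo_ball (hSd.mono hsub) hmaps hgx
  rw [dist_eq_norm (S (g x)), ← norm_neg, neg_sub,
    iterateDisplacementSum_sub_apply_of_isPeriodicPt (hper x hxr), RCLike.norm_nsmul ℂ,
    nsmul_eq_mul, ← dist_eq_norm] at hschwarz
  have hcoef : 2 * (D * (D * ε)) / (r / 4) ≤ D / 2 := by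
    rw [div_le_iff₀ (by positivity)]; nlinarith
  have hd : dist (g x) x ≤ 0 := by nlinarith [dist_nonneg (x := g x) (y := x)]
  exact dist_le_zero.1 hd

theorem stmt0_general (n D : ℕ) (hD : 1 ≤ D)
    (Ω : Set (EuclideanSpace ℂ (Fin n))) (hΩopen : IsOpen Ω)
    (hΩconn : IsConnected Ω)
    (f : ℕ → EuclideanSpace ℂ (Fin n) → EuclideanSpace ℂ (Fin n))
    (hf : ∀ m, DifferentiableOn ℂ (f m) Ω)
    (hconv : TendstoLocallyUniformlyOn (fun m => f m) id atTop Ω)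
    (Ω' : Set (EuclideanSpace ℂ (Fin n))) (hΩ'ne : Ω'.Nonempty) (hΩ'open : IsOpen Ω')
    (hΩ'sub : Ω' ⊆ Ω)
    (hord : ∀ m, ∀ x ∈ Ω', (f m)^[D] x = x) :
    ∃ m₀ : ℕ, ∀ m ≥ m₀, ∀ x ∈ Ω, f m x = x := by
  obtain ⟨x₀, hx₀⟩ := hΩ'ne
  obtain ⟨r, hr, hrΩ'⟩ := nhds_basis_closedBall.mem_iff.1 (hΩ'open.mem_nhds hx₀)
  have hrΩ : closedBall x₀ r ⊆ Ω := hrΩ'.trans hΩ'sub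
  have hunif : TendstoUniformlyOn f id atTop (closedBall x₀ r) :=
    (tendstoLocallyUniformlyOn_iff_forall_isCompact hΩopen).1 hconv _ hrΩ
      (isCompact_closedBall _ _)
  set ε := r / (16 * D)
  have hε : 0 < ε := by positivity
  obtain ⟨m₀, hm₀⟩ := eventually_atTop.1 (Metric.tendstoUniformlyOn_iff.1 hunif ε hε)
  refine ⟨m₀, fun m hm ↦ ?_⟩
  have hloc : EqOn (f m) id (ball x₀ (r / 4)) :=
    eqOn_id_ball_of_isPeriodicPt_of_dist_le (by omega) hε.le
      (mul_div_cancel₀ r (by positivity)).le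
      (fun y hy ↦ (hf m).differentiableAt (hΩopen.mem_nhds (hrΩ hy)))
      (fun y hy ↦ by rw [dist_comm]; exact (hm₀ m hm y hy).le)
      (fun y hy ↦ hord m y (hrΩ' hy))
  exact (hf m).eqOn_of_preconnected_of_eventuallyEq differentiableOn_id hΩopen
    hΩconn.isPreconnected (hrΩ (mem_closedBall_self hr.le))
    (eventually_of_mem (ball_mem_nhds x₀ (by positivity)) hloc)

/-- **Proposition (sequences of bounded order over ℂ).**
If `f m` are holomorphic on a nonempty open connected `Ω ⊆ ℂⁿ`, converge locally uniformly
on `Ω` to the identity, all iterates up to `D` of points of `closure Ω'` stay in `Ω`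
(for a nonempty open relatively compact `Ω' ⊆ Ω`), and `(f m)^[D] = id` on `Ω'`,
then `f m = id` on `Ω` for all large `m`. -/
theorem stmt0 (n D : ℕ) (hn : 1 ≤ n) (hD : 1 ≤ D)
    (Ω : Set (EuclideanSpace ℂ (Fin n))) (hΩne : Ω.Nonempty) (hΩopen : IsOpen Ω)
    (hΩconn : IsConnected Ω)
    (f : ℕ → EuclideanSpace ℂ (Fin n) → EuclideanSpace ℂ (Fin n))
    (hf : ∀ m, DifferentiableOn ℂ (f m) Ω)
    (hconv : TendstoLocallyUniformlyOn (fun m => f m) id atTop Ω)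
    (Ω' : Set (EuclideanSpace ℂ (Fin n))) (hΩ'ne : Ω'.Nonempty) (hΩ'open : IsOpen Ω')
    (hΩ'sub : Ω' ⊆ Ω) (hΩ'cpt : IsCompact (closure Ω')) (hclsub : closure Ω' ⊆ Ω)
    (hiter : ∀ m, ∀ x ∈ closure Ω', ∀ i, 1 ≤ i → i ≤ D → (f m)^[i] x ∈ Ω)
    (hord : ∀ m, ∀ x ∈ Ω', (f m)^[D] x = x) :
    ∃ m₀ : ℕ, ∀ m ≥ m₀, ∀ x ∈ Ω, f m x = x :=
  stmt0_general n D hD Ω hΩopen hΩconn f hf hconv Ω' hΩ'ne hΩ'open hΩ'sub hord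
end

section
/- Let n ≥ 1, D ≥ 1 be integers, let Ω ⊆ ℂⁿ be a nonempty open subset, and let (f_m)_{m∈ℕ} be a sequence of maps ℂⁿ → ℂⁿ, each holomorphic on Ω, converging locally uniformly on Ω to the identity map. Suppose there is a nonempty open subset Ω′ ⊆ Ω whose closure is compact and contained in Ω such that for every m, every point x in the closure of Ω′ and every i with 1 ≤ i ≤ D, the i-th iterate f_m^{[i]}(x) lies in Ω, and such that f_m^{[D]}(x) = x for every x ∈ Ω′ and every m. Suppose moreover that for each m a nonempty compact convex subset B_m ⊆ Ω′ is given with f_m(B_m) = B_m. Then there exists m₀ ∈ ℕ such that for every m ≥ m₀ there is a point P_m ∈ B_m with f_m(P_m) = P_m and such that the (complex Fréchet) derivative of f_m at P_m is the identity linear map of ℂⁿ. -/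
/-!
Cauchy estimates upgrade the uniform convergence `f m → id` near `closure Ω'` to uniform
convergence of the derivatives, so for large `m` the map `x ↦ f m x - x` is `C`-Lipschitz on
the convex set `B m`, with `C * D < 1`. A map whose displacement `x ↦ f x - x` is Lipschitz
with such a constant, and which has period `D` on an invariant set, is the identity there:
along an orbit the `D` displacements sum to zero, yet starting from the point of the orbit with
the largest displacement `M`, each of them is within `C * D * M` of the first. Hence every
point of `B m` is fixed, and the same argument applied to the linear map `A = fderiv ℂ (f m) P`,
for which `A ^ D = 1` by the chain rule, gives `A = 1`.
-/

open Filter Topology Metric Set Finset Function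
open scoped NNReal

theorem LipschitzOnWith.eqOn_id_of_iterate_eq_self {𝕜 E : Type*} [RCLike 𝕜]
    [NormedAddCommGroup E] [NormedSpace 𝕜 E] {f : E → E} {s : Set E} {K : ℝ≥0} {D : ℕ}
    (hlip : LipschitzOnWith K (fun x => f x - x) s) (hK : K * D < 1) (hD : 0 < D)
    (hmaps : MapsTo f s s) (hper : ∀ x ∈ s, f^[D] x = x) : EqOn f id s := by
  intro x hx
  set g := fun x => f x - x
  obtain ⟨k, -, hk⟩ := (range D).exists_max_image (fun j => ‖g (f^[j] x)‖)
    (nonempty_range_iff.mpr hD.ne')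
  set y := f^[k] x
  set M := ‖g y‖
  have hy : y ∈ s := hmaps.iterate k hx
  have hmax : ∀ j, ‖g (f^[j] y)‖ ≤ M := fun j => by
    rw [← iterate_add_apply, ← IsPeriodicPt.iterate_mod_apply (hper x hx)]
    exact hk _ (mem_range.2 (Nat.mod_lt _ hD))
  have hdisp : ∀ j, ‖f^[j] y - y‖ ≤ j * M := by
    intro j
    induction j with
    | zero => simp
    | succ j ih =>
      calc ‖f^[j + 1] y - y‖ = ‖g (f^[j] y) + (f^[j] y - y)‖ := by
            rw [iterate_succ_apply']; congr 1; simp only [g]; abel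
        _ ≤ M + j * M := norm_add_le_of_le (hmax j) ih
        _ = (j + 1 : ℕ) * M := by push_cast; ring
  have hsum : ∑ j ∈ range D, g (f^[j] y) = 0 := by
    simp only [g, ← iterate_succ_apply' f, sum_range_sub (fun j => f^[j] y), hper y hy,
      iterate_zero_apply, sub_self]
  have hM : D * M ≤ D * (K * D * M) :=
    calc (D : ℝ) * M = ‖∑ j ∈ range D, (g y - g (f^[j] y))‖ := by
          rw [sum_sub_distrib, hsum, sub_zero, sum_const, card_range, RCLike.norm_nsmul 𝕜,
            nsmul_eq_mul]
      _ ≤ ∑ j ∈ range D, ‖g y - g (f^[j] y)‖ := norm_sum_le _ _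
      _ ≤ ∑ j ∈ range D, K * (D * M) := by
          gcongr with j hj
          refine (hlip.norm_sub_le hy (hmaps.iterate j hy)).trans ?_
          rw [norm_sub_rev]
          gcongr
          exact (hdisp j).trans (by gcongr; exact_mod_cast (mem_range.1 hj).le)
      _ = D * (K * D * M) := by rw [sum_const, card_range, nsmul_eq_mul]; ring
  have hM0 : M = 0 := by
    have hKD : (K : ℝ) * D < 1 := by exact_mod_cast hK
    have hD' : (0 : ℝ) < D := by exact_mod_cast hD
    have := le_of_mul_le_mul_left hM hD'
    nlinarith [norm_nonneg (g y)]
  have := hk 0 (mem_range.2 hD)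
  simp only [iterate_zero_apply] at this
  exact sub_eq_zero.1 (norm_le_zero_iff.1 (hM0 ▸ this))

theorem ContinuousLinearMap.eq_one_of_pow_eq_one {𝕜 E : Type*} [RCLike 𝕜]
    [NormedAddCommGroup E] [NormedSpace 𝕜 E] {A : E →L[𝕜] E} {D : ℕ}
    (hA : A ^ D = 1) (hnorm : ‖A - 1‖₊ * D < 1) (hD : 0 < D) : A = 1 := by
  have hlip : LipschitzOnWith ‖A - 1‖₊ (fun x => A x - x) univ :=
    (A - 1).lipschitz.lipschitzOnWith
  ext x
  refine hlip.eqOn_id_of_iterate_eq_self (𝕜 := 𝕜) hnorm hD (mapsTo_univ _ _) (fun x _ => ?_)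
    (mem_univ x)
  simpa using congr($hA x)

theorem TendstoUniformlyOn.fderiv_of_cthickening {ι E F : Type*} [NormedAddCommGroup E]
    [NormedSpace ℂ E] [NormedAddCommGroup F] [NormedSpace ℂ F] {l : Filter ι}
    {f : ι → E → F} {g : E → F} {K : Set E} {δ : ℝ} (hδ : 0 < δ)
    (h : TendstoUniformlyOn f g l (cthickening δ K))
    (hf : ∀ᶠ i in l, DifferentiableOn ℂ (f i) (cthickening δ K))
    (hg : DifferentiableOn ℂ g (cthickening δ K)) :
    TendstoUniformlyOn (fun i => fderiv ℂ (f i)) (fderiv ℂ g) l K := by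
  rw [Metric.tendstoUniformlyOn_iff] at h ⊢
  intro ε hε
  filter_upwards [h (ε * δ / 3) (by positivity), hf] with i hclose hfi y hy
  have hball : ball y δ ⊆ cthickening δ K :=
    ball_subset_closedBall.trans (closedBall_subset_cthickening hy δ)
  have hnear : ∀ z ∈ ball y δ, ‖(f i - g) z‖ < ε * δ / 3 := fun z hz => by
    simpa [dist_eq_norm, norm_sub_rev] using hclose z (hball hz)
  have hmaps : MapsTo (f i - g) (ball y δ) (closedBall ((f i - g) y) (2 * (ε * δ / 3))) :=
    fun z hz => by
      rw [mem_closedBall, dist_eq_norm, two_mul]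
      exact (norm_sub_le _ _).trans (add_le_add (hnear z hz).le (hnear y (mem_ball_self hδ)).le)
  have hcauchy := Complex.norm_fderiv_le_div_of_mapsTo_ball
    ((hfi.mono hball).sub (hg.mono hball)) hmaps hδ
  have hy' : cthickening δ K ∈ 𝓝 y := mem_of_superset (ball_mem_nhds y hδ) hball
  rw [fderiv_sub (hfi.differentiableAt hy') (hg.differentiableAt hy')] at hcauchy
  rw [dist_eq_norm, norm_sub_rev]
  calc _ ≤ 2 * (ε * δ / 3) / δ := hcauchy
    _ < ε := by field_simp; linarith

theorem Convex.eqOn_id_of_iterate_eq_self {𝕜 E : Type*} [RCLike 𝕜] [NormedAddCommGroup E]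
    [NormedSpace ℝ E] [NormedSpace 𝕜 E] {f : E → E} {s : Set E} {C : ℝ≥0} {D : ℕ} (hs : Convex ℝ s)
    (hf : ∀ y ∈ s, DifferentiableAt 𝕜 f y) (hnear : ∀ y ∈ s, ‖fderiv 𝕜 f y - 1‖₊ ≤ C)
    (hCD : C * D < 1) (hD : 0 < D) (hmaps : MapsTo f s s) (hper : ∀ x ∈ s, f^[D] x = x) :
    EqOn f id s := by
  have hlip : LipschitzOnWith C (fun x => f x - x) s :=
    hs.lipschitzOnWith_of_nnnorm_fderiv_le (𝕜 := 𝕜)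
      (fun y hy => (hf y hy).sub differentiableAt_fun_id) fun y hy => by
        rw [fderiv_fun_sub (hf y hy) differentiableAt_fun_id, fderiv_fun_id]
        exact hnear y hy
  exact hlip.eqOn_id_of_iterate_eq_self (𝕜 := 𝕜) hCD hD hmaps hper

theorem fderiv_eq_one_of_iterate_eventuallyEq_id {𝕜 E : Type*} [RCLike 𝕜] [NormedAddCommGroup E]
    [NormedSpace 𝕜 E] {f : E → E} {x : E} {D : ℕ} (hf : DifferentiableAt 𝕜 f x) (hx : f x = x)
    (hper : f^[D] =ᶠ[𝓝 x] id) (hnorm : ‖fderiv 𝕜 f x - 1‖₊ * D < 1) (hD : 0 < D) :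
    fderiv 𝕜 f x = 1 := by
  refine ContinuousLinearMap.eq_one_of_pow_eq_one ?_ hnorm hD
  rw [← (hf.hasFDerivAt.iterate hx D).fderiv, hper.fderiv_eq, fderiv_id]
  rfl

theorem stmt2_general (n D : ℕ) (hD : 1 ≤ D)
    (Ω : Set (EuclideanSpace ℂ (Fin n))) (hΩopen : IsOpen Ω)
    (f : ℕ → EuclideanSpace ℂ (Fin n) → EuclideanSpace ℂ (Fin n))
    (hf : ∀ m, DifferentiableOn ℂ (f m) Ω)
    (hconv : TendstoLocallyUniformlyOn (fun m => f m) id atTop Ω)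
    (Ω' : Set (EuclideanSpace ℂ (Fin n))) (hΩ'open : IsOpen Ω')
    (hΩ'cpt : IsCompact (closure Ω')) (hclsub : closure Ω' ⊆ Ω)
    (hord : ∀ m, ∀ x ∈ Ω', (f m)^[D] x = x)
    (B : ℕ → Set (EuclideanSpace ℂ (Fin n)))
    (hBne : ∀ m, (B m).Nonempty)
    (hBconv : ∀ m, Convex ℝ (B m)) (hBsub : ∀ m, B m ⊆ Ω')
    (hBinv : ∀ m, f m '' B m = B m) :
    ∃ m₀ : ℕ, ∀ m ≥ m₀, ∃ P ∈ B m, f m P = P ∧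
      fderiv ℂ (f m) P = ContinuousLinearMap.id ℂ (EuclideanSpace ℂ (Fin n)) := by
  obtain ⟨δ, hδ, hδΩ⟩ := hΩ'cpt.exists_cthickening_subset_open hΩopen hclsub
  have hderiv : TendstoUniformlyOn (fun m => fderiv ℂ (f m)) (fderiv ℂ id) atTop (closure Ω') :=
    ((tendstoLocallyUniformlyOn_iff_forall_isCompact hΩopen).mp hconv _ hδΩ
      hΩ'cpt.cthickening).fderiv_of_cthickening hδ
      (.of_forall fun m => (hf m).mono hδΩ) differentiableOn_id
  obtain ⟨C, hC, hCD⟩ : ∃ C : ℝ≥0, 0 < C ∧ C * D < 1 :=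
    ⟨(2 * D)⁻¹, by positivity, by rw [← NNReal.coe_lt_coe]; push_cast; field_simp; norm_num⟩
  obtain ⟨m₀, hm₀⟩ := eventually_atTop.mp (Metric.tendstoUniformlyOn_iff.mp hderiv C hC)
  refine ⟨m₀, fun m hm => ?_⟩
  have hdiff : ∀ y ∈ B m, DifferentiableAt ℂ (f m) y := fun y hy =>
    (hf m).differentiableAt (hΩopen.mem_nhds (hclsub (subset_closure (hBsub m hy))))
  have hnear : ∀ y ∈ B m, ‖fderiv ℂ (f m) y - 1‖₊ ≤ C := fun y hy => by
    have := hm₀ m hm y (subset_closure (hBsub m hy))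
    rw [fderiv_id, dist_comm, dist_eq_norm] at this
    exact_mod_cast this.le
  have hfix : EqOn (f m) id (B m) := (hBconv m).eqOn_id_of_iterate_eq_self hdiff hnear hCD hD
    (mapsTo_iff_image_subset.2 (hBinv m).le) fun x hx => hord m x (hBsub m hx)
  obtain ⟨P, hP⟩ := hBne m
  exact ⟨P, hP, hfix hP, fderiv_eq_one_of_iterate_eventuallyEq_id (hdiff P hP) (hfix hP)
    (eventually_of_mem (hΩ'open.mem_nhds (hBsub m hP)) (hord m))
    ((mul_le_mul_left (hnear P hP) _).trans_lt hCD) hD⟩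

/-- **Lemma (fixed points with identity differential).**
Under the assumptions of the bounded-order proposition, given for each `m` a nonempty compact
convex `B_m ⊆ Ω'` with `f m '' B_m = B_m`, for all large `m` there is a fixed point
`P_m ∈ B_m` of `f m` at which the complex Fréchet derivative of `f m` is the identity. -/
theorem stmt2 (n D : ℕ) (hn : 1 ≤ n) (hD : 1 ≤ D)
    (Ω : Set (EuclideanSpace ℂ (Fin n))) (hΩne : Ω.Nonempty) (hΩopen : IsOpen Ω)
    (f : ℕ → EuclideanSpace ℂ (Fin n) → EuclideanSpace ℂ (Fin n))
    (hf : ∀ m, DifferentiableOn ℂ (f m) Ω)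
    (hconv : TendstoLocallyUniformlyOn (fun m => f m) id atTop Ω)
    (Ω' : Set (EuclideanSpace ℂ (Fin n))) (hΩ'ne : Ω'.Nonempty) (hΩ'open : IsOpen Ω')
    (hΩ'sub : Ω' ⊆ Ω) (hΩ'cpt : IsCompact (closure Ω')) (hclsub : closure Ω' ⊆ Ω)
    (hiter : ∀ m, ∀ x ∈ closure Ω', ∀ i, 1 ≤ i → i ≤ D → (f m)^[i] x ∈ Ω)
    (hord : ∀ m, ∀ x ∈ Ω', (f m)^[D] x = x)
    (B : ℕ → Set (EuclideanSpace ℂ (Fin n)))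
    (hBne : ∀ m, (B m).Nonempty) (hBcpt : ∀ m, IsCompact (B m))
    (hBconv : ∀ m, Convex ℝ (B m)) (hBsub : ∀ m, B m ⊆ Ω')
    (hBinv : ∀ m, f m '' B m = B m) :
    ∃ m₀ : ℕ, ∀ m ≥ m₀, ∃ P ∈ B m, f m P = P ∧
      fderiv ℂ (f m) P = ContinuousLinearMap.id ℂ (EuclideanSpace ℂ (Fin n)) :=
  stmt2_general n D hD Ω hΩopen f hf hconv Ω' hΩ'open hΩ'cpt hclsub hord B hBne hBconv hBsub hBinv
end

section
/- Let n ≥ 1 and D ≥ 1 be integers, and let (A_m)_{m∈ℕ} be a sequence of complex n×n matrices such that for every m there is an integer k with 1 ≤ k ≤ D and A_m^k = 1 (i.e. each A_m has finite multiplicative order at most D), and such that A_m converges entrywise to the identity matrix. Then there exists m₀ such that A_m = 1 for all m ≥ m₀. -/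
open Filter Topology

/-!
If `x ^ N = 1` then `(∑_{i<N} xⁱ) (x - 1) = x ^ N - 1 = 0`. As `x → 1` the geometric sum tends
to `N • 1`, which is invertible, so it is eventually invertible and `x = 1` eventually. All `A m`
satisfy `A m ^ D! = 1`, and invertibility of matrices is an open condition via the determinant.
-/

theorem pow_factorial_eq_one {M : Type*} [Monoid M] {x : M} {k D : ℕ} (hk : 1 ≤ k) (hkD : k ≤ D)
    (hx : x ^ k = 1) : x ^ D.factorial = 1 := by
  obtain ⟨c, hc⟩ := Nat.dvd_factorial hk hkD
  rw [hc, pow_mul, hx, one_pow]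

theorem eq_one_of_pow_eq_one_of_isUnit_geom_sum {R : Type*} [Ring R] {x : R} {N : ℕ}
    (hx : x ^ N = 1) (hS : IsUnit (∑ i ∈ Finset.range N, x ^ i)) : x = 1 := by
  have hgeom : (∑ i ∈ Finset.range N, x ^ i) * (x - 1) = 0 := by
    rw [geom_sum_mul, hx, sub_self]
  exact sub_eq_zero.mp (hS.mul_right_eq_zero.mp hgeom)

theorem Filter.Tendsto.eventually_eq_one_of_pow_eq_one {R α : Type*} [Ring R] [TopologicalSpace R]
    [IsTopologicalRing R] (hU : IsOpen {x : R | IsUnit x}) {l : Filter α} {f : α → R} {N : ℕ}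
    (hN : IsUnit (N : R)) (hf : Tendsto f l (𝓝 1)) (hpow : ∀ᶠ a in l, f a ^ N = 1) :
    ∀ᶠ a in l, f a = 1 := by
  have hsum : Tendsto (fun a => ∑ i ∈ Finset.range N, f a ^ i) l (𝓝 (N : R)) := by
    simpa using tendsto_finsetSum (Finset.range N) fun i _ => hf.pow i
  filter_upwards [hsum (hU.mem_nhds hN), hpow] with a hunit hfa
  exact eq_one_of_pow_eq_one_of_isUnit_geom_sum hfa hunit

theorem Matrix.isOpen_setOf_isUnit {ι R : Type*} [Fintype ι] [DecidableEq ι] [CommRing R]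
    [TopologicalSpace R] [IsTopologicalRing R] (hU : IsOpen {x : R | IsUnit x}) :
    IsOpen {A : Matrix ι ι R | IsUnit A} := by
  simp_rw [Matrix.isUnit_iff_isUnit_det]
  exact hU.preimage continuous_id.matrix_det

theorem stmt3_general (n D : ℕ)
    (A : ℕ → Matrix (Fin n) (Fin n) ℂ)
    (hord : ∀ m, ∃ k, 1 ≤ k ∧ k ≤ D ∧ A m ^ k = 1)
    (hconv : Tendsto A atTop (𝓝 (1 : Matrix (Fin n) (Fin n) ℂ))) :
    ∃ m₀ : ℕ, ∀ m ≥ m₀, A m = 1 := by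
  have hpow : ∀ m, A m ^ D.factorial = 1 := fun m => by
    obtain ⟨k, hk, hkD, hAk⟩ := hord m
    exact pow_factorial_eq_one hk hkD hAk
  have hN : IsUnit (D.factorial : Matrix (Fin n) (Fin n) ℂ) := by
    simpa only [map_natCast] using
      (Nat.cast_ne_zero.mpr D.factorial_ne_zero : (D.factorial : ℂ) ≠ 0).isUnit.map
        (algebraMap ℂ (Matrix (Fin n) (Fin n) ℂ))
  exact eventually_atTop.mp <| hconv.eventually_eq_one_of_pow_eq_one
    (Matrix.isOpen_setOf_isUnit Units.isOpen) hN (Eventually.of_forall hpow)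

/-- A sequence of complex `n × n` matrices of multiplicative order at most `D` converging
(entrywise) to the identity matrix is eventually equal to the identity. -/
theorem stmt3 (n D : ℕ) (hn : 1 ≤ n) (hD : 1 ≤ D)
    (A : ℕ → Matrix (Fin n) (Fin n) ℂ)
    (hord : ∀ m, ∃ k, 1 ≤ k ∧ k ≤ D ∧ A m ^ k = 1)
    (hconv : Tendsto A atTop (𝓝 (1 : Matrix (Fin n) (Fin n) ℂ))) :
    ∃ m₀ : ℕ, ∀ m ≥ m₀, A m = 1 :=
  stmt3_general n D A hord hconv
end

section
/- Let n ≥ 1, let Ω ⊆ ℂⁿ be an open subset, and let (g_m)_{m∈ℕ} be a sequence of maps ℂⁿ → ℂⁿ, each holomorphic on Ω, converging locally uniformly on Ω to the identity map. Then for every compact convex subset K ⊆ Ω there exists m₀ such that for all m ≥ m₀ the real-valued function z ↦ ‖g_m(z)‖² is convex on K. -/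
/-!
Fix `m` with `‖g m z - z‖ ≤ ε` on the closed `r`-neighbourhood of `K`. Along a segment
`t ↦ x + t • v` of `K` put `f t = g m (x + t • v)`; then
`(‖f‖²)'' = 2 (‖f'‖² + Re ⟪f, f''⟫)`. Since `f` extends holomorphically to complex `t` in discs
of radius `r / ‖v‖` around `[0, 1]`, Cauchy's estimates give `‖f' - v‖ ≤ ε ‖v‖ / r` and
`‖f''‖ ≤ 2 ε ‖v‖² / r²`, so this second derivative is nonnegative once `ε` is small compared with
`r` and `sup_K ‖z‖`. Locally uniform convergence provides such an `ε` for all large `m`.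
-/

open Filter Metric Set
open scoped InnerProductSpace

theorem HasDerivAt.comp_ofReal' {E : Type*} [NormedAddCommGroup E] [NormedSpace ℂ E]
    {e : ℂ → E} {e' : E} {t : ℝ} (he : HasDerivAt e e' t) :
    HasDerivAt (fun s : ℝ => e s) e' t := by
  simpa [Function.comp_def] using he.scomp t Complex.ofRealCLM.hasDerivAt

section NormSq

variable {𝕜 E : Type*} [RCLike 𝕜] [NormedAddCommGroup E] [InnerProductSpace 𝕜 E]
  [NormedSpace ℝ E]

theorem HasDerivAt.re_inner {f g : ℝ → E} {f' g' : E} {t : ℝ} (hf : HasDerivAt f f' t)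
    (hg : HasDerivAt g g' t) :
    HasDerivAt (fun s => RCLike.re ⟪f s, g s⟫_𝕜)
      (RCLike.re ⟪f t, g'⟫_𝕜 + RCLike.re ⟪f', g t⟫_𝕜) t := by
  have := (RCLike.reCLM (K := 𝕜)).hasFDerivAt.comp_hasDerivAt t (hf.inner 𝕜 hg)
  simp only [map_add, RCLike.reCLM_apply] at this
  exact this

theorem convexOn_norm_sq_of_hasDerivAt {D : Set ℝ} (hD : Convex ℝ D) {f f' f'' : ℝ → E}
    (hf : ∀ t ∈ D, HasDerivAt f (f' t) t) (hf' : ∀ t ∈ interior D, HasDerivAt f' (f'' t) t)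
    (hf'' : ∀ t ∈ interior D, 0 ≤ ‖f' t‖ ^ 2 + RCLike.re ⟪f t, f'' t⟫_𝕜) :
    ConvexOn ℝ D fun t => ‖f t‖ ^ 2 := by
  have hd1 (t) (ht : t ∈ D) :
      HasDerivAt (fun s => ‖f s‖ ^ 2) (2 * RCLike.re ⟪f t, f' t⟫_𝕜) t := by
    simp only [← inner_self_eq_norm_sq (𝕜 := 𝕜)]
    convert (hf t ht).re_inner (𝕜 := 𝕜) (hf t ht) using 1
    rw [← inner_conj_symm, RCLike.conj_re]
    ring
  have hd2 (t) (ht : t ∈ interior D) :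
      HasDerivAt (fun s => 2 * RCLike.re ⟪f s, f' s⟫_𝕜)
        (2 * (‖f' t‖ ^ 2 + RCLike.re ⟪f t, f'' t⟫_𝕜)) t := by
    have := ((hf t (interior_subset ht)).re_inner (𝕜 := 𝕜) (hf' t ht)).const_mul 2
    rwa [inner_self_eq_norm_sq, add_comm] at this
  exact convexOn_of_hasDerivWithinAt2_nonneg hD
    (fun t ht => (hd1 t ht).continuousAt.continuousWithinAt)
    (fun t ht => (hd1 t (interior_subset ht)).hasDerivWithinAt)
    (fun t ht => (hd2 t ht).hasDerivWithinAt) fun t ht => by linarith [hf'' t ht]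

end NormSq

theorem norm_add_sq_add_re_inner_nonneg {𝕜 E : Type*} [RCLike 𝕜] [NormedAddCommGroup E]
    [InnerProductSpace 𝕜 E] {v a p b : E} {r C ε : ℝ} (hr : 0 < r) (hε : 0 ≤ ε)
    (hεr : 2 * ε ≤ r) (hεC : 8 * ε * (C + r) ≤ r ^ 2) (ha : ‖a‖ ≤ ε * (‖v‖ / r))
    (hb : ‖b‖ ≤ 2 * ε * (‖v‖ ^ 2 / r ^ 2)) (hp : ‖p‖ ≤ C + ε) :
    0 ≤ ‖v + a‖ ^ 2 + RCLike.re ⟪p, b⟫_𝕜 := by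
  have ha_half : ‖a‖ ≤ ‖v‖ / 2 := by
    refine ha.trans ?_
    rw [mul_div_assoc', div_le_div_iff₀ hr two_pos]
    nlinarith [norm_nonneg v]
  have hva : ‖v‖ / 2 ≤ ‖v + a‖ := by linarith [norm_le_add_norm_add v a]
  have hpb : ‖p‖ * ‖b‖ ≤ (‖v‖ / 2) ^ 2 :=
    calc ‖p‖ * ‖b‖ ≤ (C + ε) * (2 * ε * (‖v‖ ^ 2 / r ^ 2)) :=
          mul_le_mul hp hb (norm_nonneg _) ((norm_nonneg _).trans hp)
      _ = 8 * ε * (C + ε) / r ^ 2 * (‖v‖ / 2) ^ 2 := by field_simp; ring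
      _ ≤ (‖v‖ / 2) ^ 2 := by
          refine mul_le_of_le_one_left (by positivity) ((div_le_one (by positivity)).mpr ?_)
          nlinarith
  have hre : -(‖p‖ * ‖b‖) ≤ RCLike.re ⟪p, b⟫_𝕜 :=
    (abs_le.mp ((RCLike.abs_re_le_norm _).trans (norm_inner_le_norm p b))).1
  linarith [pow_le_pow_left₀ (by positivity) hva 2]

section Cauchy

variable {E : Type*} [NormedAddCommGroup E] [NormedSpace ℂ E] {f : ℂ → E} {c : ℂ} {R C : ℝ}

theorem norm_deriv_le_of_differentiableOn_closedBall (hR : 0 < R)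
    (hf : DifferentiableOn ℂ f (closedBall c R)) (hC : ∀ z ∈ closedBall c R, ‖f z‖ ≤ C) :
    ‖deriv f c‖ ≤ C / R :=
  Complex.norm_deriv_le_of_forall_mem_sphere_norm_le hR (hf.diffContOnCl_ball subset_rfl)
    fun z hz => hC z (sphere_subset_closedBall hz)

theorem norm_deriv_deriv_le_of_differentiableOn_closedBall [CompleteSpace E] (hR : 0 < R)
    (hf : DifferentiableOn ℂ f (closedBall c R)) (hC : ∀ z ∈ closedBall c R, ‖f z‖ ≤ C) :
    ‖deriv (deriv f) c‖ ≤ 2 * C / R ^ 2 := by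
  simpa [iteratedDeriv_succ] using
    Complex.norm_iteratedDeriv_le_of_forall_mem_sphere_norm_le 2 hR
      (hf.diffContOnCl_ball subset_rfl) fun z hz => hC z (sphere_subset_closedBall hz)

end Cauchy

theorem mapsTo_add_smul_closedBall {E : Type*} [NormedAddCommGroup E] [NormedSpace ℂ E]
    {x v : E} (hv : v ≠ 0) (t : ℂ) (r : ℝ) :
    MapsTo (fun w : ℂ => x + w • v) (closedBall t (r / ‖v‖)) (closedBall (x + t • v) r) := by
  intro w hw
  rw [mem_closedBall_iff_norm, add_sub_add_left_eq_sub, ← sub_smul, norm_smul,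
    ← le_div_iff₀ (norm_pos_iff.mpr hv)]
  exact mem_closedBall_iff_norm.mp hw

section AlmostIdentity

variable {E : Type*} [NormedAddCommGroup E] [InnerProductSpace ℂ E] [CompleteSpace E]

theorem convexOn_Icc_norm_sq_along_line_of_norm_sub_le {h : E → E} {U : Set E} {x v : E}
    {r C ε : ℝ} (hr : 0 < r) (hU : ∀ t ∈ Icc (0 : ℝ) 1, closedBall (x + t • v) r ⊆ U)
    (hh : DifferentiableOn ℂ h U) (hε : ∀ z ∈ U, ‖h z - z‖ ≤ ε)
    (hC : ∀ t ∈ Icc (0 : ℝ) 1, ‖x + t • v‖ ≤ C) (hεr : 2 * ε ≤ r)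
    (hεC : 8 * ε * (C + r) ≤ r ^ 2) :
    ConvexOn ℝ (Icc 0 1) fun t : ℝ => ‖h (x + t • v)‖ ^ 2 := by
  rcases eq_or_ne v 0 with rfl | hv
  · simpa using convexOn_const (‖h x‖ ^ 2) (convex_Icc (0 : ℝ) 1)
  set ρ := r / ‖v‖ with hρ_def
  have hρ : 0 < ρ := div_pos hr (norm_pos_iff.mpr hv)
  set L : ℂ → E := fun w => x + w • v
  have hL_real (t : ℝ) : L t = x + t • v := by simp [L, Complex.coe_smul]
  have hL_deriv (w : ℂ) : HasDerivAt L v w := by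
    simpa only [one_smul] using ((hasDerivAt_id' w).smul_const v).const_add x
  have hL_ball (t) (ht : t ∈ Icc (0 : ℝ) 1) : MapsTo L (closedBall (t : ℂ) ρ) U := by
    simpa only [← hL_real] using (mapsTo_add_smul_closedBall hv (t : ℂ) r).mono_right (hU t ht)
  set ψ : ℂ → E := fun w => h (L w) - L w
  have hψ_diff (t) (ht : t ∈ Icc (0 : ℝ) 1) : DifferentiableOn ℂ ψ (closedBall (t : ℂ) ρ) :=
    (hh.comp (fun w _ => (hL_deriv w).differentiableAt.differentiableWithinAt) (hL_ball t ht)).sub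
      fun w _ => (hL_deriv w).differentiableAt.differentiableWithinAt
  have hψ_le (t) (ht : t ∈ Icc (0 : ℝ) 1) : ∀ w ∈ closedBall (t : ℂ) ρ, ‖ψ w‖ ≤ ε :=
    fun w hw => hε _ (hL_ball t ht hw)
  have hψ_analytic (t) (ht : t ∈ Icc (0 : ℝ) 1) : AnalyticAt ℂ ψ t :=
    ((hψ_diff t ht).mono ball_subset_closedBall).analyticAt (ball_mem_nhds _ hρ)
  have hf (t) (ht : t ∈ Icc (0 : ℝ) 1) :
      HasDerivAt (fun s : ℝ => h (x + s • v)) (v + deriv ψ t) t := by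
    have := ((hL_deriv t).add (hψ_analytic t ht).differentiableAt.hasDerivAt).comp_ofReal'
    simpa [ψ, hL_real] using this
  have hf' (t) (ht : t ∈ interior (Icc (0 : ℝ) 1)) :
      HasDerivAt (fun s : ℝ => v + deriv ψ s) (deriv (deriv ψ) t) t :=
    (hψ_analytic t (interior_subset ht)).deriv.differentiableAt.hasDerivAt.comp_ofReal'.const_add v
  refine convexOn_norm_sq_of_hasDerivAt (𝕜 := ℂ) (convex_Icc 0 1) hf hf' fun t ht => ?_
  have ht' := interior_subset ht
  have hz : x + t • v ∈ U := hU t ht' (mem_closedBall_self hr.le)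
  refine norm_add_sq_add_re_inner_nonneg hr ((norm_nonneg _).trans (hε _ hz)) hεr hεC ?_ ?_ ?_
  · exact (norm_deriv_le_of_differentiableOn_closedBall hρ (hψ_diff t ht')
      (hψ_le t ht')).trans_eq (by rw [hρ_def]; field_simp)
  · exact (norm_deriv_deriv_le_of_differentiableOn_closedBall hρ (hψ_diff t ht')
      (hψ_le t ht')).trans_eq (by rw [hρ_def]; field_simp)
  · calc ‖h (x + t • v)‖ = ‖(x + t • v) + (h (x + t • v) - (x + t • v))‖ := by
          rw [add_sub_cancel]
      _ ≤ C + ε := (norm_add_le _ _).trans (add_le_add (hC t ht') (hε _ hz))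

theorem convexOn_norm_sq_of_norm_sub_le {h : E → E} {K : Set E} {r C ε : ℝ} (hK : Convex ℝ K)
    (hr : 0 < r) (hh : DifferentiableOn ℂ h (cthickening r K))
    (hε : ∀ z ∈ cthickening r K, ‖h z - z‖ ≤ ε) (hC : ∀ z ∈ K, ‖z‖ ≤ C) (hεr : 2 * ε ≤ r)
    (hεC : 8 * ε * (C + r) ≤ r ^ 2) :
    ConvexOn ℝ K fun z => ‖h z‖ ^ 2 := by
  refine ⟨hK, fun x hx y hy a b ha hb hab => ?_⟩
  have hseg (t) (ht : t ∈ Icc (0 : ℝ) 1) : x + t • (y - x) ∈ K := hK.add_smul_sub_mem hx hy ht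
  have hline := convexOn_Icc_norm_sq_along_line_of_norm_sub_le hr
    (fun t ht => closedBall_subset_cthickening (hseg t ht) r) hh hε (fun t ht => hC _ (hseg t ht))
    hεr hεC
  have hcomb : a • x + b • y = x + b • (y - x) := by
    obtain rfl : a = 1 - b := by linarith
    module
  simpa [hcomb] using
    hline.2 (left_mem_Icc.mpr zero_le_one) (right_mem_Icc.mpr zero_le_one) ha hb hab

end AlmostIdentity

theorem stmt9_general (n : ℕ)
    (Ω : Set (EuclideanSpace ℂ (Fin n))) (hΩopen : IsOpen Ω)
    (g : ℕ → EuclideanSpace ℂ (Fin n) → EuclideanSpace ℂ (Fin n))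
    (hg : ∀ m, DifferentiableOn ℂ (g m) Ω)
    (hconv : TendstoLocallyUniformlyOn (fun m => g m) id atTop Ω)
    (K : Set (EuclideanSpace ℂ (Fin n))) (hKcpt : IsCompact K) (hKconv : Convex ℝ K)
    (hKΩ : K ⊆ Ω) :
    ∃ m₀ : ℕ, ∀ m ≥ m₀, ConvexOn ℝ K (fun z => ‖g m z‖ ^ 2) := by
  obtain ⟨r, hr, hrΩ⟩ := hKcpt.exists_cthickening_subset_open hΩopen hKΩ
  obtain ⟨C, hC, hKC⟩ := hKcpt.isBounded.exists_pos_norm_le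
  have hunif : TendstoUniformlyOn g id atTop (cthickening r K) :=
    (tendstoLocallyUniformlyOn_iff_forall_isCompact hΩopen).mp hconv _ hrΩ hKcpt.cthickening
  set ε := r ^ 2 / (8 * (C + r))
  have hε : 0 < ε := by positivity
  obtain ⟨m₀, hm₀⟩ := eventually_atTop.mp (Metric.tendstoUniformlyOn_iff.mp hunif ε hε)
  refine ⟨m₀, fun m hm => convexOn_norm_sq_of_norm_sub_le (ε := ε) hKconv hr ((hg m).mono hrΩ)
    (fun z hz => ?_) hKC ?_ ?_⟩
  · simpa [dist_eq_norm'] using (hm₀ m hm z hz).le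
  · rw [mul_div_assoc', div_le_iff₀ (by positivity)]
    nlinarith
  · exact le_of_eq (by simp only [ε]; field_simp)

/-- If holomorphic maps `g m` converge locally uniformly on an open set `Ω ⊆ ℂⁿ` to the
identity, then for every compact convex `K ⊆ Ω` the functions `z ↦ ‖g m z‖²` are
eventually convex on `K`. -/
theorem stmt9 (n : ℕ) (hn : 1 ≤ n)
    (Ω : Set (EuclideanSpace ℂ (Fin n))) (hΩopen : IsOpen Ω)
    (g : ℕ → EuclideanSpace ℂ (Fin n) → EuclideanSpace ℂ (Fin n))
    (hg : ∀ m, DifferentiableOn ℂ (g m) Ω)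
    (hconv : TendstoLocallyUniformlyOn (fun m => g m) id atTop Ω)
    (K : Set (EuclideanSpace ℂ (Fin n))) (hKcpt : IsCompact K) (hKconv : Convex ℝ K)
    (hKΩ : K ⊆ Ω) :
    ∃ m₀ : ℕ, ∀ m ≥ m₀, ConvexOn ℝ K (fun z => ‖g m z‖ ^ 2) :=
  stmt9_general n Ω hΩopen g hg hconv K hKcpt hKconv hKΩ
end

section
/- Let n ≥ 1, D ≥ 1 be integers, let Ω ⊆ ℂⁿ be a nonempty open subset, and let (f_m)_{m∈ℕ} be a sequence of maps ℂⁿ → ℂⁿ, each holomorphic on Ω, converging locally uniformly on Ω to the identity map. Let Ω′ ⊆ Ω be a nonempty open subset whose closure is compact and contained in Ω, and suppose that for every m, every point x in the closure of Ω′ and every i with 1 ≤ i ≤ D, the i-th iterate f_m^{[i]}(x) lies in Ω. Then for each i with 1 ≤ i ≤ D, the sequence of iterates f_m^{[i]} converges locally uniformly on Ω′ to the identity map. -/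
open Filter Topology

/-- If holomorphic maps `f m` converge locally uniformly on `Ω` to the identity and all
iterates up to `D` of points of `closure Ω'` stay in `Ω` (with `closure Ω'` compact
and contained in `Ω`), then for each `1 ≤ i ≤ D` the iterates `(f m)^[i]` converge
locally uniformly on `Ω'` to the identity. -/
theorem stmt11 (n D : ℕ) (hn : 1 ≤ n) (hD : 1 ≤ D)
    (Ω : Set (EuclideanSpace ℂ (Fin n))) (hΩne : Ω.Nonempty) (hΩopen : IsOpen Ω)
    (f : ℕ → EuclideanSpace ℂ (Fin n) → EuclideanSpace ℂ (Fin n))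
    (hf : ∀ m, DifferentiableOn ℂ (f m) Ω)
    (hconv : TendstoLocallyUniformlyOn (fun m => f m) id atTop Ω)
    (Ω' : Set (EuclideanSpace ℂ (Fin n))) (hΩ'ne : Ω'.Nonempty) (hΩ'open : IsOpen Ω')
    (hΩ'sub : Ω' ⊆ Ω) (hΩ'cpt : IsCompact (closure Ω')) (hclsub : closure Ω' ⊆ Ω)
    (hiter : ∀ m, ∀ x ∈ closure Ω', ∀ i, 1 ≤ i → i ≤ D → (f m)^[i] x ∈ Ω) :
    ∀ i, 1 ≤ i → i ≤ D →
      TendstoLocallyUniformlyOn (fun m => (f m)^[i]) id atTop Ω' := by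
  intro i hi1
  induction i, hi1 using Nat.le_induction with
  | base =>
    intro _
    simpa using hconv.mono hΩ'sub
  | succ i hi ih =>
    intro hiD
    have IH := ih (le_trans (Nat.le_succ i) hiD)
    rw [Metric.tendstoLocallyUniformlyOn_iff] at IH ⊢
    intro ε hε x hx
    -- f m → id locally uniformly at x (x ∈ Ω)
    have hxΩ : x ∈ Ω := hΩ'sub hx
    rw [Metric.tendstoLocallyUniformlyOn_iff] at hconv
    obtain ⟨s, hs, hsf⟩ := hconv (ε / 2) (by linarith) x hxΩ
    -- pick δ > 0 with ball x δ ⊆ s ∩ Ω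
    have hsnhds : s ∈ 𝓝 x := by
      rwa [hΩopen.nhdsWithin_eq hxΩ] at hs
    obtain ⟨δ, hδ, hball⟩ := Metric.mem_nhds_iff.mp hsnhds
    set ε' := min (ε / 2) (δ / 4) with hε'def
    have hε' : 0 < ε' := lt_min (by linarith) (by linarith)
    obtain ⟨t, ht, htf⟩ := IH ε' hε' x hx
    refine ⟨t ∩ Metric.ball x (δ / 2), inter_mem ht
      (mem_nhdsWithin_of_mem_nhds (Metric.ball_mem_nhds x (by linarith))), ?_⟩
    filter_upwards [htf, hsf] with m h1 h2 y hy
    obtain ⟨hyt, hyb⟩ := hy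
    have h3 : dist y ((f m)^[i] y) < ε' := h1 y hyt
    have hz : (f m)^[i] y ∈ Metric.ball x δ := by
      have : dist ((f m)^[i] y) x ≤ dist ((f m)^[i] y) y + dist y x := dist_triangle _ _ _
      have h4 : dist ((f m)^[i] y) y < δ / 4 := by
        rw [dist_comm]; exact lt_of_lt_of_le h3 (min_le_right _ _)
      have h5 : dist y x < δ / 2 := hyb
      simp only [Metric.mem_ball]
      linarith
    have h6 : dist ((f m)^[i] y) (f m ((f m)^[i] y)) < ε / 2 := h2 _ (hball hz)
    have : dist y ((f m)^[i + 1] y) ≤ dist y ((f m)^[i] y)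
        + dist ((f m)^[i] y) ((f m)^[i + 1] y) := dist_triangle _ _ _
    rw [Function.iterate_succ_apply'] at this ⊢
    have h7 : ε' ≤ ε / 2 := min_le_left _ _
    simp only [id_eq] at *
    linarith
end
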